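/- arXiv:1712.08230 — 3 statements merged into one kernel-verified Lean document; each statement's English description precedes it below -/
import Mathlib

section
/- Let K, t, q be positive integers with t ≤ K and q ≤ K, let S be a set of K elements, and let Q ⊆ S with |Q| = q. Then K · |{𝒯 ⊆ S : |𝒯| = t and 𝒯 ∩ Q ≠ ∅}| ≥ q · binomial(K, t). -/
/-!
The `t`-sets missing `Q` are the `t`-subsets of its complement, so there are `binom(K - q, t)`
of them. Since `m ↦ binom(m, t) / m` is nondecreasing for `t > 0`, this is at most
`(K - q) / K · binom(K, t)`, leaving at least `q / K · binom(K, t)` sets that meet `Q`.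
-/

open Finset

theorem Nat.mul_choose_le_mul_choose {m n t : ℕ} (ht : 0 < t) (hmn : m ≤ n) :
    n * m.choose t ≤ m * n.choose t := by
  obtain ⟨s, rfl⟩ := Nat.exists_eq_succ_of_ne_zero ht.ne'
  rcases m with _ | m
  · simp
  obtain ⟨n, rfl⟩ : ∃ n', n = n' + 1 := ⟨n - 1, by omega⟩
  refine Nat.le_of_mul_le_mul_right ?_ s.succ_pos
  -- `(m + 1) * m.choose s = (m + 1).choose (s + 1) * (s + 1)` reduces to monotonicity of `choose · s`
  calc (n + 1) * (m + 1).choose (s + 1) * (s + 1)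
      = (n + 1) * ((m + 1) * m.choose s) := by rw [mul_assoc, Nat.add_one_mul_choose_eq]
    _ ≤ (n + 1) * ((m + 1) * n.choose s) := by gcongr; omega
    _ = (m + 1) * (n + 1).choose (s + 1) * (s + 1) := by
      rw [mul_assoc (m + 1), ← Nat.add_one_mul_choose_eq]; ring

theorem Finset.card_powersetCard_filter_not_inter_nonempty {α : Type*} [Fintype α]
    [DecidableEq α] (t : ℕ) (Q : Finset α) :
    #{T ∈ powersetCard t (univ : Finset α) | ¬(T ∩ Q).Nonempty} =
      (Fintype.card α - #Q).choose t := by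
  have : {T ∈ powersetCard t (univ : Finset α) | ¬(T ∩ Q).Nonempty} = powersetCard t Qᶜ := by
    ext T
    simp [mem_powersetCard, not_nonempty_iff_eq_empty, ← disjoint_iff_inter_eq_empty,
      subset_compl_iff_disjoint_right, and_comm]
  rw [this, card_powersetCard, card_compl]

theorem Finset.card_powersetCard_filter_inter_nonempty {α : Type*} [Fintype α]
    [DecidableEq α] (t : ℕ) (Q : Finset α) :
    #{T ∈ powersetCard t (univ : Finset α) | (T ∩ Q).Nonempty} =
      (Fintype.card α).choose t - (Fintype.card α - #Q).choose t := by
  rw [← card_powersetCard_filter_not_inter_nonempty, ← card_univ, ← card_powersetCard]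
  exact eq_tsub_of_add_eq (card_filter_add_card_filter_not _)

theorem intersecting_batches_fraction_general
    (K t q : ℕ) (ht : 0 < t)
    (Q : Finset (Fin K)) (hQ : Q.card = q) :
    q * K.choose t ≤
      K * ((Finset.powersetCard t (Finset.univ : Finset (Fin K))).filter
        (fun 𝒯 => (𝒯 ∩ Q).Nonempty)).card := by
  rw [card_powersetCard_filter_inter_nonempty, Fintype.card_fin, hQ, Nat.mul_sub]
  have hqK : q ≤ K := by simpa [hQ] using card_le_univ Q
  have hmissed : K * (K - q).choose t ≤ K * K.choose t - q * K.choose t := by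
    rw [← Nat.sub_mul]; exact Nat.mul_choose_le_mul_choose ht (Nat.sub_le K q)
  have : q * K.choose t ≤ K * K.choose t := Nat.mul_le_mul_right _ hqK
  omega

/-- Any `q` servers collectively store at least a fraction `q/K` of all
`binom(K, t)` batches: `K · |{𝒯 : |𝒯| = t, 𝒯 ∩ Q ≠ ∅}| ≥ q · binom(K, t)`. -/
theorem intersecting_batches_fraction
    (K t q : ℕ) (hK : 0 < K) (ht : 0 < t) (hq : 0 < q)
    (htK : t ≤ K) (hqK : q ≤ K)
    (Q : Finset (Fin K)) (hQ : Q.card = q) :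
    q * K.choose t ≤
      K * ((Finset.powersetCard t (Finset.univ : Finset (Fin K))).filter
        (fun 𝒯 => (𝒯 ∩ Q).Nonempty)).card :=
  intersecting_batches_fraction_general K t q ht Q hQ
end

section
/- Let r, B, T be positive integers with B dividing r and T dividing r. Set Y := ⌊r/(B·T)⌋ and d := r/B − Y·T. Define the B×T nonnegative integer matrix P by p_{i,j} = Y + |{a ∈ ℕ : a < d·B, ⌊a/d⌋ + 1 = i, (a mod T) + 1 = j}| for 1 ≤ i ≤ B and 1 ≤ j ≤ T (the counting set being empty when d = 0). Then every row of P sums to r/B and every column of P sums to r/T; that is, P is a valid assignment matrix. -/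
/-!
Write `r / B = T * Y + d`, so that `d = (r / B) % T` and `d * B = r - B * T * Y` is divisible
by `T`. The counter `a` runs over `[0, d * B)`; its row index `a / d` takes every value `< B`
exactly `d` times and its column index `a % T` takes every value `< T` exactly `d * B / T` times.
Hence every row sums to `T * Y + d = r / B` and every column to `B * Y + d * B / T = r / T`.
-/

open Finset

lemma Finset.sum_card_filter_and_eq_card_filter {ι κ : Type*} [DecidableEq κ] {s : Finset ι}
    {t : Finset κ} {p : ι → Prop} [DecidablePred p] {f : ι → κ}
    (hf : ∀ a ∈ s, p a → f a ∈ t) :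
    ∑ j ∈ t, #{a ∈ s | p a ∧ f a = j} = #{a ∈ s | p a} := by
  simp_rw [← filter_filter]
  exact (card_eq_sum_card_fiberwise fun a ha => hf a (mem_filter.1 ha).1 (mem_filter.1 ha).2).symm

lemma Nat.card_filter_range_mul_div_eq {d B i : ℕ} (hi : i < B) :
    #{a ∈ range (d * B) | a / d = i} = d := by
  rcases Nat.eq_zero_or_pos d with rfl | hd
  · simp
  have hsub : i * d + d ≤ d * B := by nlinarith
  have hfiber : {a ∈ range (d * B) | a / d = i} = Ico (i * d) (i * d + d) := by
    ext a
    simp only [mem_filter, mem_range, mem_Ico, Nat.div_eq_iff hd]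
    omega
  simp [hfiber]

lemma Nat.card_filter_range_mul_mod_eq {T k j : ℕ} (hj : j < T) :
    #{a ∈ range (T * k) | a % T = j} = k := by
  have hT : 0 < T := by omega
  have hcount := Nat.count_modEq_card (T * k) hT j
  simpa [Nat.count_eq_card_filter_range, Nat.ModEq, Nat.mod_eq_of_lt hj, hT] using hcount

lemma Nat.div_sub_div_mul_mul_eq_mod (r B T : ℕ) : r / B - r / (B * T) * T = r / B % T := by
  rw [← Nat.div_div_eq_div_mul, Nat.mod_eq_sub_mul_div, Nat.mul_comm]

theorem heuristic_solver_valid_assignment_general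
    (r B T : ℕ) (hT : 0 < T)
    (hBr : B ∣ r) (hTr : T ∣ r)
    (Y d : ℕ) (hY : Y = r / (B * T)) (hd : d = r / B - Y * T)
    (P : ℕ → ℕ → ℕ)
    (hP : ∀ i ∈ Finset.Icc 1 B, ∀ j ∈ Finset.Icc 1 T,
      P i j = Y + ((Finset.range (d * B)).filter
        (fun a => a / d + 1 = i ∧ a % T + 1 = j)).card) :
    (∀ i ∈ Finset.Icc 1 B, ∑ j ∈ Finset.Icc 1 T, P i j = r / B) ∧
    (∀ j ∈ Finset.Icc 1 T, ∑ i ∈ Finset.Icc 1 B, P i j = r / T) := by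
  have hrB : r / B = T * Y + d := by
    rw [hd, hY, Nat.div_sub_div_mul_mul_eq_mod, ← Nat.div_div_eq_div_mul, Nat.div_add_mod]
  have hr : r = T * (B * Y) + d * B := by
    rw [← Nat.mul_div_cancel' hBr, hrB]
    ring
  obtain ⟨k, hk⟩ : T ∣ d * B := (Nat.dvd_add_right (dvd_mul_right T _)).1 (hr ▸ hTr)
  have hrT : r / T = B * Y + k := by
    rw [hr, hk, ← Nat.mul_add, Nat.mul_div_cancel_left _ hT]
  constructor
  · intro i hi
    obtain ⟨i, rfl⟩ : ∃ i', i = i' + 1 := ⟨i - 1, by grind⟩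
    have hcol : ∀ a ∈ range (d * B), a / d + 1 = i + 1 → a % T + 1 ∈ Icc 1 T := fun a _ _ =>
      mem_Icc.2 ⟨Nat.le_add_left 1 _, Nat.mod_lt a hT⟩
    simp_rw [sum_congr rfl fun j hj => hP _ hi j hj, sum_add_distrib, sum_const, Nat.card_Icc,
      Nat.add_sub_cancel, smul_eq_mul, sum_card_filter_and_eq_card_filter hcol,
      Nat.add_right_cancel_iff, Nat.card_filter_range_mul_div_eq (by grind : i < B), hrB]
  · intro j hj
    obtain ⟨j, rfl⟩ : ∃ j', j = j' + 1 := ⟨j - 1, by grind⟩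
    have hrow : ∀ a ∈ range (d * B), a % T + 1 = j + 1 → a / d + 1 ∈ Icc 1 B := fun a ha _ =>
      mem_Icc.2 ⟨Nat.le_add_left 1 _, Nat.div_lt_of_lt_mul (mem_range.1 ha)⟩
    simp_rw [sum_congr rfl fun i hi => hP i hi _ hj, sum_add_distrib, sum_const, Nat.card_Icc,
      Nat.add_sub_cancel, smul_eq_mul, and_comm (a := _ / d + 1 = _),
      sum_card_filter_and_eq_card_filter hrow, Nat.add_right_cancel_iff, hk,
      Nat.card_filter_range_mul_mod_eq (by grind : j < T), hrT]

/-- The matrix produced by the heuristic assignment solver (Algorithm 1) is a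
valid assignment matrix: every row sums to the batch size `r/B` and every
column sums to `r/T`. Entry `(i, j)` (with `1 ≤ i ≤ B`, `1 ≤ j ≤ T`) equals
`Y + |{a < d·B : ⌊a/d⌋ + 1 = i ∧ (a mod T) + 1 = j}|` where `Y = ⌊r/(B·T)⌋`
and `d = r/B − Y·T`. -/
theorem heuristic_solver_valid_assignment
    (r B T : ℕ) (hr : 0 < r) (hB : 0 < B) (hT : 0 < T)
    (hBr : B ∣ r) (hTr : T ∣ r)
    (Y d : ℕ) (hY : Y = r / (B * T)) (hd : d = r / B - Y * T)
    (P : ℕ → ℕ → ℕ)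
    (hP : ∀ i ∈ Finset.Icc 1 B, ∀ j ∈ Finset.Icc 1 T,
      P i j = Y + ((Finset.range (d * B)).filter
        (fun a => a / d + 1 = i ∧ a % T + 1 = j)).card) :
    (∀ i ∈ Finset.Icc 1 B, ∑ j ∈ Finset.Icc 1 T, P i j = r / B) ∧
    (∀ j ∈ Finset.Icc 1 T, ∑ i ∈ Finset.Icc 1 B, P i j = r / T) :=
  heuristic_solver_valid_assignment_general r B T hT hBr hTr Y d hY hd P hP
end

section
/- Let K, t, q, m, r, T be positive integers with t ≤ q ≤ K, q·r = K·m, B := binomial(K, t) dividing r, T dividing m, and T dividing r/B. Set c := (r/B)/T and let P be the constant assignment matrix with every entry equal to c. Then: (i) for every q-element subset Q of a fixed K-element set S and every partition j ∈ {1, …, T}, Σ_{𝒯 : 𝒯 ∩ Q ≠ ∅} P(𝒯, j) ≥ m/T, where 𝒯 ranges over t-element subsets of S; and (ii) for every collection I of batches, Σ_{j=1}^{T} max(m/T − c·|I|, 0) = max(m − (r/B)·|I|, 0). That is, the constant assignment matrix simultaneously preserves the map-phase computational delay and the communication load of the unpartitioned scheme. -/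
/-!
Each batch carries `c` rows of every partition, so (i) is a count of the `t`-subsets meeting `Q`.
There are `C(K, t) - C(K - q, t)` of them, at least a fraction `q / K` of all `C(K, t)` because
`C(n, t) / n` increases with `n`; with `q * B * c = K * (m / T)`, read off from `q * r = K * m`,
this gives at least `m / T` rows. Part (ii) is `T * (m / T - c * |I|) = m - T * c * |I|`.
-/

section

open Finset

-- `k * n.choose k = n * (n - 1).choose (k - 1)`, and `(n - 1).choose (k - 1)` grows with `n`.
theorem Nat.choose_mul_le_choose_mul_of_le {k n N : ℕ} (hk : 0 < k) (hnN : n ≤ N) :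
    n.choose k * N ≤ N.choose k * n := by
  obtain ⟨k, rfl⟩ := Nat.exists_eq_succ_of_ne_zero hk.ne'
  obtain _ | a := n
  · simp
  obtain ⟨b, rfl⟩ : ∃ b, N = b + 1 := ⟨N - 1, by omega⟩
  refine Nat.le_of_mul_le_mul_right ?_ (Nat.succ_pos k)
  calc (a + 1).choose (k + 1) * (b + 1) * (k + 1)
      = (a + 1) * (b + 1) * a.choose k := by rw [mul_right_comm, ← Nat.add_one_mul_choose_eq]; ring
    _ ≤ (a + 1) * (b + 1) * b.choose k := Nat.mul_le_mul_left _ (Nat.choose_le_choose k (by omega))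
    _ = (b + 1).choose (k + 1) * (a + 1) * (k + 1) := by
      rw [mul_right_comm _ (a + 1), ← Nat.add_one_mul_choose_eq]; ring

variable {α : Type*} [Fintype α] [DecidableEq α]

theorem Finset.filter_not_inter_nonempty_powersetCard_univ (t : ℕ) (Q : Finset α) :
    {𝒯 ∈ powersetCard t (univ : Finset α) | ¬(𝒯 ∩ Q).Nonempty} = powersetCard t Qᶜ := by
  ext 𝒯
  simp [subset_compl_iff_disjoint_right, disjoint_iff_inter_eq_empty, not_nonempty_iff_eq_empty,
    and_comm]

theorem Finset.card_mul_choose_le_card_mul_card_filter_powersetCard_inter_nonempty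
    {t : ℕ} (ht : 0 < t) (Q : Finset α) :
    #Q * (Fintype.card α).choose t ≤
      Fintype.card α * #{𝒯 ∈ powersetCard t (univ : Finset α) | (𝒯 ∩ Q).Nonempty} := by
  set K := Fintype.card α
  set F := {𝒯 ∈ powersetCard t (univ : Finset α) | (𝒯 ∩ Q).Nonempty}
  have hQK : #Q ≤ K := card_le_univ Q
  have hsplit : #F + (K - #Q).choose t = K.choose t := by
    rw [← card_compl, ← card_powersetCard, ← filter_not_inter_nonempty_powersetCard_univ,
      card_filter_add_card_filter_not, card_powersetCard, card_univ]
  have hF : K * #F + K * (K - #Q).choose t = K * K.choose t := by rw [← mul_add, hsplit]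
  have hQ : K.choose t * (K - #Q) + K.choose t * #Q = K.choose t * K := by
    rw [← mul_add, Nat.sub_add_cancel hQK]
  have := Nat.choose_mul_le_choose_mul_of_le ht (Nat.sub_le K #Q)
  linarith

end

theorem constant_assignment_preserves_delay_and_load_general
    (K t q m r T : ℕ)
    (hK : 0 < K) (ht : 0 < t) (hT : 0 < T)
    (hqr : q * r = K * m)
    (hB : K.choose t ∣ r)
    (hTm : T ∣ m) (hTrB : T ∣ r / K.choose t)
    (c : ℕ) (hc : c = (r / K.choose t) / T) :
    (∀ Q ∈ Finset.powersetCard q (Finset.univ : Finset (Fin K)),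
      ∀ j ∈ Finset.Icc 1 T,
        m / T ≤
          ∑ 𝒯 ∈ (Finset.powersetCard t (Finset.univ : Finset (Fin K))).filter
            (fun 𝒯 => (𝒯 ∩ Q).Nonempty), c) ∧
    (∀ I : Finset (Finset (Fin K)),
      I ⊆ Finset.powersetCard t (Finset.univ : Finset (Fin K)) →
        ∑ j ∈ Finset.Icc 1 T, max (m / T - c * I.card) 0 =
          max (m - (r / K.choose t) * I.card) 0) := by
  set B := K.choose t
  have hcT : r / B = T * c := hc ▸ (Nat.mul_div_cancel' hTrB).symm
  have hqBc : q * B * c = K * (m / T) := by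
    refine Nat.eq_of_mul_eq_mul_left hT ?_
    calc T * (q * B * c) = q * (B * (r / B)) := by rw [hcT]; ring
      _ = K * m := by rw [Nat.mul_div_cancel' hB, hqr]
      _ = T * (K * (m / T)) := by rw [mul_left_comm, Nat.mul_div_cancel' hTm]
  refine ⟨fun Q hQ _ _ ↦ ?_, fun I _ ↦ ?_⟩
  · have hmeet := Finset.card_mul_choose_le_card_mul_card_filter_powersetCard_inter_nonempty ht Q
    rw [(Finset.mem_powersetCard.1 hQ).2, Fintype.card_fin] at hmeet
    rw [Finset.sum_const, smul_eq_mul, ← Nat.mul_le_mul_left_iff hK, ← hqBc, ← mul_assoc]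
    exact Nat.mul_le_mul_right c hmeet
  · simp only [Finset.sum_const, Nat.card_Icc, Nat.add_sub_cancel, smul_eq_mul, Nat.max_zero]
    rw [hcT, Nat.mul_sub, ← mul_assoc, Nat.mul_div_cancel' hTm]

/-- The constant assignment matrix with entry `c = (r/B)/T` simultaneously
preserves the map-phase computational delay and the communication load of the
unpartitioned scheme: (i) any `q` servers collectively store at least `m/T`
coded rows of every partition, and (ii) a server holding the contents of a
collection `I` of batches needs exactly as many further intermediate values as
in the unpartitioned scheme. -/
theorem constant_assignment_preserves_delay_and_load
    (K t q m r T : ℕ)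
    (hK : 0 < K) (ht : 0 < t) (hq : 0 < q) (hm : 0 < m) (hr : 0 < r) (hT : 0 < T)
    (htq : t ≤ q) (hqK : q ≤ K)
    (hqr : q * r = K * m)
    (hB : K.choose t ∣ r)
    (hTm : T ∣ m) (hTrB : T ∣ r / K.choose t)
    (c : ℕ) (hc : c = (r / K.choose t) / T) :
    (∀ Q ∈ Finset.powersetCard q (Finset.univ : Finset (Fin K)),
      ∀ j ∈ Finset.Icc 1 T,
        m / T ≤
          ∑ 𝒯 ∈ (Finset.powersetCard t (Finset.univ : Finset (Fin K))).filter
            (fun 𝒯 => (𝒯 ∩ Q).Nonempty), c) ∧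
    (∀ I : Finset (Finset (Fin K)),
      I ⊆ Finset.powersetCard t (Finset.univ : Finset (Fin K)) →
        ∑ j ∈ Finset.Icc 1 T, max (m / T - c * I.card) 0 =
          max (m - (r / K.choose t) * I.card) 0) :=
  constant_assignment_preserves_delay_and_load_general K t q m r T hK ht hT hqr hB hTm hTrB c hc
end
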